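/- arXiv:2512.04255 — 5 statements merged into one kernel-verified Lean document; each statement's English description precedes it below -/
import Mathlib

section
/- For a bipartite state ρ_{AB} on a tensor product of finite-dimensional spaces, the j-th mode of the reduced state ρ_A = tr_B(ρ_{AB}) with respect to L_A equals the partial trace over B of the j-th global mode of ρ_{AB} with respect to L_{AB} = L_A ⊗ I + I ⊗ L_B, where L_A, L_B are the local number operators. -/
open Matrix ComplexOrder

/-- The `j`th local mode with respect to the number operator. -/
def mode (d : ℕ) (j : ℤ) (ρ : Matrix (Fin d) (Fin d) ℂ) : Matrix (Fin d) (Fin d) ℂ :=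
  Matrix.of fun m n => if (m : ℤ) - (n : ℤ) = j then ρ m n else 0

/-- The `j`th global mode with respect to `L_AB = L_A ⊗ I + I ⊗ L_B`. -/
def gmode (d : ℕ) (j : ℤ) (ρ : Matrix (Fin d × Fin d) (Fin d × Fin d) ℂ) :
    Matrix (Fin d × Fin d) (Fin d × Fin d) ℂ :=
  Matrix.of fun x y =>
    if ((x.1 : ℤ) + (x.2 : ℤ)) - ((y.1 : ℤ) + (y.2 : ℤ)) = j then ρ x y else 0

/-- The partial trace over subsystem `B`. -/
noncomputable def ptraceB (d : ℕ) (ρ : Matrix (Fin d × Fin d) (Fin d × Fin d) ℂ) :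
    Matrix (Fin d) (Fin d) ℂ :=
  Matrix.of fun a c => ∑ b : Fin d, ρ (a, b) (c, b)

-- The partial trace only sees entries diagonal in `B`, and on those the `B`-numbers cancel.
theorem gmode_apply_same_right {d : ℕ} (j : ℤ) (ρ : Matrix (Fin d × Fin d) (Fin d × Fin d) ℂ)
    (a c b : Fin d) :
    gmode d j ρ (a, b) (c, b) = if (a : ℤ) - c = j then ρ (a, b) (c, b) else 0 := by
  simp only [gmode, of_apply, add_sub_add_right_eq_sub]

theorem local_mode_eq_ptrace_global_mode_general {d : ℕ}
    (ρ : Matrix (Fin d × Fin d) (Fin d × Fin d) ℂ)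
    (j : ℤ) :
    mode d j (ptraceB d ρ) = ptraceB d (gmode d j ρ) := by
  ext a c
  simp only [mode, ptraceB, of_apply, gmode_apply_same_right]
  split_ifs <;> simp

/-- The `j`th local mode of the reduced state is the partial trace of the `j`th
global mode. -/
theorem local_mode_eq_ptrace_global_mode {d : ℕ}
    (ρ : Matrix (Fin d × Fin d) (Fin d × Fin d) ℂ)
    (hρ : ρ.PosSemidef) (htr : ρ.trace = 1) (j : ℤ) :
    mode d j (ptraceB d ρ) = ptraceB d (gmode d j ρ) :=
  local_mode_eq_ptrace_global_mode_general ρ j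
end

section
/- Under the Bloch recurrence with n_x² + n_z² ≤ 1, the coherence after any number m of steps satisfies |n_x^m| ≤ √(n_x² + n_z²) = √(2 tr(ρ²) − 1), where the initial state ρ has purity tr(ρ²) = (1 + n_x² + n_z²)/2. -/
/-!
The squared length `n_x² + n_z²` of the Bloch vector never increases along the recurrence:
one step lowers it by exactly `n_x² n_z² (1 − n_x² − n_z⁴) / (1 + n_z²)²`, which is nonnegative
on the unit disc because `n_z⁴ ≤ n_z²` there. So every iterate stays in the disc of radius
`√(n_x² + n_z²)`, and in particular so does its `x`-component.
-/

/-- One step of the Bloch-vector recurrence: `(n_x, n_z) ↦ (n_x √(1 + n_z²), n_z (1 − n_x²/(1 + n_z²)))`. -/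
noncomputable def blochStep (p : ℝ × ℝ) : ℝ × ℝ :=
  (p.1 * Real.sqrt (1 + p.2 ^ 2), p.2 * (1 - p.1 ^ 2 / (1 + p.2 ^ 2)))

theorem sq_add_sq_sub_sq_add_sq_blochStep (p : ℝ × ℝ) :
    p.1 ^ 2 + p.2 ^ 2 - ((blochStep p).1 ^ 2 + (blochStep p).2 ^ 2) =
      p.1 ^ 2 * p.2 ^ 2 * (1 - p.1 ^ 2 - p.2 ^ 4) / (1 + p.2 ^ 2) ^ 2 := by
  have hpos : (0 : ℝ) < 1 + p.2 ^ 2 := by positivity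
  have hsqrt : Real.sqrt (1 + p.2 ^ 2) ^ 2 = 1 + p.2 ^ 2 := Real.sq_sqrt hpos.le
  simp only [blochStep, mul_pow, hsqrt]
  field_simp
  ring

theorem blochStep_sq_add_sq_le {p : ℝ × ℝ} (h : p.1 ^ 2 + p.2 ^ 2 ≤ 1) :
    (blochStep p).1 ^ 2 + (blochStep p).2 ^ 2 ≤ p.1 ^ 2 + p.2 ^ 2 := by
  have hquartic : p.2 ^ 4 ≤ p.2 ^ 2 := by nlinarith [sq_nonneg p.1, sq_nonneg p.2]
  have hdrop : 0 ≤ p.1 ^ 2 * p.2 ^ 2 * (1 - p.1 ^ 2 - p.2 ^ 4) / (1 + p.2 ^ 2) ^ 2 := by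
    have : 0 ≤ 1 - p.1 ^ 2 - p.2 ^ 4 := by linarith
    positivity
  linarith [sq_add_sq_sub_sq_add_sq_blochStep p]

theorem iterate_blochStep_sq_add_sq_le {p : ℝ × ℝ} (h : p.1 ^ 2 + p.2 ^ 2 ≤ 1) (m : ℕ) :
    (blochStep^[m] p).1 ^ 2 + (blochStep^[m] p).2 ^ 2 ≤ p.1 ^ 2 + p.2 ^ 2 := by
  induction m with
  | zero => rfl
  | succ k ih =>
    rw [Function.iterate_succ_apply']
    exact (blochStep_sq_add_sq_le (ih.trans h)).trans ih

/-- After any number of steps of the concatenation protocol, the coherence is bounded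
by `√(n_x² + n_z²) = √(2 tr(ρ²) − 1)`, where `tr(ρ²) = (1 + n_x² + n_z²)/2`. -/
theorem coherence_bounded_by_purity (nx nz : ℝ) (hdisc : nx ^ 2 + nz ^ 2 ≤ 1) :
    (∀ m : ℕ, |(blochStep^[m] (nx, nz)).1| ≤ Real.sqrt (nx ^ 2 + nz ^ 2)) ∧
      Real.sqrt (nx ^ 2 + nz ^ 2) =
        Real.sqrt (2 * ((1 + nx ^ 2 + nz ^ 2) / 2) - 1) := by
  refine ⟨fun m => Real.abs_le_sqrt ?_, by ring_nf⟩
  linarith [iterate_blochStep_sq_add_sq_le (p := (nx, nz)) hdisc m,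
    sq_nonneg (blochStep^[m] (nx, nz)).2]
end

section
/- If the initial Bloch vector satisfies n_x^0 ≠ 0 and n_x² + n_z² ≤ 1, then the limit of n_z^m under the Bloch recurrence is 0 (and both limits exist by monotone convergence). -/
/-!
On the upper half disc, which the step preserves, `n_z` is nonincreasing and nonnegative, so it
converges to some `L`. Meanwhile `n_x` is `n_x⁰` times the product `G_m` of the factors
`√(1 + n_z²) ≥ 1`; this product increases and is bounded by `1 / |n_x⁰|` because the orbit stays
in the disc, so it converges to some `G ≥ 1`. In the limit `G = G √(1 + L²)`, forcing `L = 0`.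
-/

open Filter Set

def upperHalfDisc : Set (ℝ × ℝ) := {p | p.1 ^ 2 + p.2 ^ 2 ≤ 1 ∧ 0 ≤ p.2}

noncomputable def blochGain (p : ℝ × ℝ) (m : ℕ) : ℝ :=
  ∏ k ∈ Finset.range m, √(1 + (blochStep^[k] p).2 ^ 2)

lemma blochStep_snd_le {p : ℝ × ℝ} (hz : 0 ≤ p.2) : (blochStep p).2 ≤ p.2 :=
  mul_le_of_le_one_right hz (sub_le_self _ (by positivity))

lemma mapsTo_blochStep_upperHalfDisc : MapsTo blochStep upperHalfDisc upperHalfDisc := by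
  rintro ⟨x, z⟩ ⟨hdisc, hz⟩
  have hu : 0 < 1 + z ^ 2 := by positivity
  have hfactor : 0 ≤ 1 - x ^ 2 / (1 + z ^ 2) := by
    rw [sub_nonneg, div_le_one hu]; nlinarith
  refine ⟨?_, mul_nonneg hz hfactor⟩
  have hrest : 0 ≤ 1 - x ^ 2 - z ^ 2 := by linarith
  have key : x ^ 2 * (1 + z ^ 2) * (1 + z ^ 2) ^ 2 + z ^ 2 * (1 + z ^ 2 - x ^ 2) ^ 2
      ≤ (1 + z ^ 2) ^ 2 := by
    nlinarith [mul_nonneg hrest (by positivity : (0 : ℝ) ≤ 1 + 2 * z ^ 2 + z ^ 6),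
      mul_nonneg (mul_nonneg hrest (sq_nonneg z)) (sq_nonneg x),
      sq_nonneg (z ^ 2 * (1 - z ^ 2))]
  calc (x * √(1 + z ^ 2)) ^ 2 + (z * (1 - x ^ 2 / (1 + z ^ 2))) ^ 2
      = (x ^ 2 * (1 + z ^ 2) * (1 + z ^ 2) ^ 2 + z ^ 2 * (1 + z ^ 2 - x ^ 2) ^ 2)
          / (1 + z ^ 2) ^ 2 := by
        rw [mul_pow, Real.sq_sqrt hu.le]; field_simp
    _ ≤ 1 := (div_le_one (by positivity)).2 key

lemma iterate_blochStep_mem {p : ℝ × ℝ} (hp : p ∈ upperHalfDisc) (m : ℕ) :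
    blochStep^[m] p ∈ upperHalfDisc :=
  mapsTo_blochStep_upperHalfDisc.iterate m hp

lemma antitone_snd_iterate_blochStep {p : ℝ × ℝ} (hp : p ∈ upperHalfDisc) :
    Antitone fun m => (blochStep^[m] p).2 :=
  antitone_nat_of_succ_le fun m => by
    rw [Function.iterate_succ_apply']
    exact blochStep_snd_le (iterate_blochStep_mem hp m).2

lemma blochGain_succ (p : ℝ × ℝ) (m : ℕ) :
    blochGain p (m + 1) = blochGain p m * √(1 + (blochStep^[m] p).2 ^ 2) :=
  Finset.prod_range_succ _ _

lemma one_le_blochGain (p : ℝ × ℝ) (m : ℕ) : 1 ≤ blochGain p m :=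
  Finset.one_le_prod fun _ _ => Real.one_le_sqrt.2 (le_add_of_nonneg_right (sq_nonneg _))

lemma monotone_blochGain (p : ℝ × ℝ) : Monotone (blochGain p) :=
  monotone_nat_of_le_succ fun m => by
    rw [blochGain_succ]
    exact le_mul_of_one_le_right (zero_le_one.trans (one_le_blochGain p m))
      (Real.one_le_sqrt.2 (le_add_of_nonneg_right (sq_nonneg _)))

lemma fst_iterate_blochStep (p : ℝ × ℝ) (m : ℕ) :
    (blochStep^[m] p).1 = p.1 * blochGain p m := by
  induction m with
  | zero => simp [blochGain]
  | succ m ih =>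
    rw [Function.iterate_succ_apply', blochGain_succ, ← mul_assoc, ← ih]
    rfl

lemma blochGain_le_inv_abs {p : ℝ × ℝ} (hp : p ∈ upperHalfDisc) (hx : p.1 ≠ 0) (m : ℕ) :
    blochGain p m ≤ |p.1|⁻¹ := by
  have hsq : (blochStep^[m] p).1 ^ 2 ≤ 1 := by
    nlinarith [(iterate_blochStep_mem hp m).1, sq_nonneg (blochStep^[m] p).2]
  have habs : |p.1| * blochGain p m ≤ 1 := by
    rw [← abs_of_nonneg (zero_le_one.trans (one_le_blochGain p m)), ← abs_mul,
      ← fst_iterate_blochStep]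
    exact (sq_le_one_iff_abs_le_one _).1 hsq
  rwa [← one_div, le_div_iff₀' (abs_pos.2 hx)]

/-- If the initial state is coherent (`n_x ≠ 0`), the `z`-component tends to `0`
under the Bloch recurrence, and the `x`-component converges. -/
theorem bloch_z_tendsto_zero (nx nz : ℝ) (hdisc : nx ^ 2 + nz ^ 2 ≤ 1)
    (hx : nx ≠ 0) (hz : 0 ≤ nz) :
    Tendsto (fun m => (blochStep^[m] (nx, nz)).2) atTop (nhds 0) ∧
      ∃ a : ℝ, Tendsto (fun m => (blochStep^[m] (nx, nz)).1) atTop (nhds a) := by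
  have hp : (nx, nz) ∈ upperHalfDisc := ⟨hdisc, hz⟩
  obtain ⟨L, hL⟩ : ∃ L, Tendsto (fun m => (blochStep^[m] (nx, nz)).2) atTop (nhds L) :=
    ⟨_, tendsto_atTop_ciInf (antitone_snd_iterate_blochStep hp)
      ⟨0, forall_mem_range.2 fun m => (iterate_blochStep_mem hp m).2⟩⟩
  obtain ⟨G, hG⟩ : ∃ G, Tendsto (blochGain (nx, nz)) atTop (nhds G) :=
    ⟨_, tendsto_atTop_ciSup (monotone_blochGain _)
      ⟨_, forall_mem_range.2 (blochGain_le_inv_abs hp hx)⟩⟩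
  have hG_pos : 0 < G := zero_lt_one.trans_le (ge_of_tendsto' hG (one_le_blochGain _))
  have hfix : G * √(1 + L ^ 2) = G := by
    refine tendsto_nhds_unique ?_ (hG.comp (tendsto_add_atTop_nat 1))
    simp_rw [Function.comp_def, blochGain_succ]
    exact hG.mul ((hL.pow 2).const_add 1).sqrt
  have hL0 : L = 0 := by
    have := (mul_eq_left₀ hG_pos.ne').1 hfix
    rw [Real.sqrt_eq_one] at this
    simpa using this
  refine ⟨hL0 ▸ hL, nx * G, ?_⟩
  simp_rw [fst_iterate_blochStep]
  exact hG.const_mul nx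
end

section
/- Let P be a linear map between finite-dimensional inner product spaces with orthonormal bases {φ_i}, {ψ_j}. For any shift j, the sum over n of |⟨ψ_{n+j}, P φ_n⟩| (a sum of k nonzero terms along a diagonal) is at most the k-th Ky-Fan norm of P, i.e., the sum of the k largest singular values of P. -/
/-
Write `P = U Σ Wᴴ`, where `Σ` is the diagonal of singular values, `W` is a unitary matrix of
eigenvectors of `PᴴP` and `U = P W Σ⁺` is a partial isometry. Then
`|P p q| ≤ ∑ i, σ i |U p i| |W q i|`, so the diagonal sum is at most `∑ i, σ i c i` with
`c i = ∑_{(p,q)} |U p i| |W q i|`. Rows and columns of a partial isometry have norm at most `1`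
and a diagonal meets every row and every column at most once, so Cauchy–Schwarz gives
`0 ≤ c i ≤ 1` and `∑ i, c i ≤ k`. On that polytope `∑ i, σ i c i` is at most the sum of the
`k` largest `σ i`.
-/

open Matrix ComplexOrder

/-- The singular values of a rectangular complex matrix: square roots of the
eigenvalues of `PᴴP`. -/
noncomputable def singularValues {m n : ℕ} (P : Matrix (Fin m) (Fin n) ℂ) :
    Fin n → ℝ :=
  fun i => Real.sqrt ((Matrix.posSemidef_conjTranspose_mul_self P).1.eigenvalues i)

/-- The `k`th Ky-Fan norm: the sum of the `k` largest singular values, expressed as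
the supremum over `k`-element subsets (valid since singular values are nonnegative). -/
noncomputable def kyFan {m n : ℕ} (k : ℕ) (P : Matrix (Fin m) (Fin n) ℂ) : ℝ :=
  sSup {x : ℝ | ∃ s : Finset (Fin n), s.card = k ∧ x = ∑ i ∈ s, singularValues P i}

open Finset

section Selection
variable {ι : Type*} [Fintype ι] {σ c : ι → ℝ}

lemma sum_mul_le_sum_of_threshold [DecidableEq ι] {s : Finset ι} {t : ℝ} (ht : 0 ≤ t)
    (hs : ∀ i ∈ s, t ≤ σ i) (hsc : ∀ i ∉ s, σ i ≤ t)
    (hc0 : ∀ i, 0 ≤ c i) (hc1 : ∀ i, c i ≤ 1) (hc : ∑ i, c i ≤ #s) :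
    ∑ i, σ i * c i ≤ ∑ i ∈ s, σ i := by
  have hin : ∑ i ∈ s, σ i * c i ≤ ∑ i ∈ s, σ i - t * ∑ i ∈ s, (1 - c i) := by
    rw [mul_sum, ← sum_sub_distrib]
    refine sum_le_sum fun i hi => ?_
    nlinarith [hs i hi, hc1 i]
  have hout : ∑ i ∈ sᶜ, σ i * c i ≤ t * ∑ i ∈ sᶜ, c i := by
    rw [mul_sum]
    exact sum_le_sum fun i hi => mul_le_mul_of_nonneg_right (hsc i (mem_compl.1 hi)) (hc0 i)
  have hslack : t * (∑ i ∈ s, c i + ∑ i ∈ sᶜ, c i - #s) ≤ 0 :=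
    mul_nonpos_of_nonneg_of_nonpos ht (by rw [sum_add_sum_compl]; linarith)
  rw [← sum_add_sum_compl s]
  simp only [sum_sub_distrib, sum_const, nsmul_eq_mul, mul_one] at hin
  linarith

lemma exists_card_eq_threshold (hσ : ∀ i, 0 ≤ σ i) {k : ℕ} (hk : k ≤ Fintype.card ι) :
    ∃ s : Finset ι, #s = k ∧ ∃ t, 0 ≤ t ∧ (∀ i ∈ s, t ≤ σ i) ∧ ∀ i ∉ s, σ i ≤ t := by
  classical
  obtain ⟨s, hsk, hmax⟩ := (powersetCard k (univ : Finset ι)).exists_max_image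
    (fun s => ∑ i ∈ s, σ i) (powersetCard_nonempty.2 (by simpa using hk))
  rw [mem_powersetCard_univ] at hsk
  have hswap : ∀ i ∈ s, ∀ j ∉ s, σ j ≤ σ i := by
    intro i hi j hj
    have hj' : j ∉ s.erase i := fun h => hj (mem_of_mem_erase h)
    have := hmax (insert j (s.erase i)) (by
      rw [mem_powersetCard_univ, card_insert_of_notMem hj', card_erase_of_mem hi, hsk]
      have := card_pos.2 ⟨i, hi⟩
      omega)
    rw [sum_insert hj', ← sum_erase_add s σ hi] at this
    linarith
  refine ⟨s, hsk, ?_⟩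
  rcases s.eq_empty_or_nonempty with rfl | hne
  · exact ⟨∑ i, σ i, sum_nonneg fun i _ => hσ i, by simp,
      fun i _ => single_le_sum (fun i _ => hσ i) (mem_univ i)⟩
  · obtain ⟨i₀, hi₀, hmin⟩ := s.exists_min_image σ hne
    exact ⟨σ i₀, hσ i₀, hmin, fun j hj => hswap i₀ hi₀ j hj⟩

lemma exists_card_eq_sum_mul_le (hσ : ∀ i, 0 ≤ σ i) (hc0 : ∀ i, 0 ≤ c i) (hc1 : ∀ i, c i ≤ 1)
    {k : ℕ} (hc : ∑ i, c i ≤ k) (hk : k ≤ Fintype.card ι) :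
    ∃ s : Finset ι, #s = k ∧ ∑ i, σ i * c i ≤ ∑ i ∈ s, σ i := by
  classical
  obtain ⟨s, rfl, t, ht, hs, hsc⟩ := exists_card_eq_threshold hσ hk
  exact ⟨s, rfl, sum_mul_le_sum_of_threshold ht hs hsc hc0 hc1 hc⟩

end Selection

lemma sum_mul_le_one_of_sum_sq_le_one {γ : Type*} (s : Finset γ) {f g : γ → ℝ}
    (hf : ∑ x ∈ s, f x ^ 2 ≤ 1) (hg : ∑ x ∈ s, g x ^ 2 ≤ 1) : ∑ x ∈ s, f x * g x ≤ 1 := by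
  have hsq : (∑ x ∈ s, f x * g x) ^ 2 ≤ 1 :=
    (sum_mul_sq_le_sq_mul_sq s f g).trans
      (mul_le_one₀ hf (sum_nonneg fun x _ => sq_nonneg _) hg)
  nlinarith

section Matching
variable {α β : Type*} {S : Finset (α × β)}

lemma sum_comp_fst_le [Fintype α] (hS : Set.InjOn Prod.fst (S : Set (α × β))) {f : α → ℝ}
    (hf : ∀ a, 0 ≤ f a) : ∑ x ∈ S, f x.1 ≤ ∑ a, f a := by
  classical
  rw [← sum_image hS]
  exact sum_le_univ_sum_of_nonneg hf

lemma sum_comp_snd_le [Fintype β] (hS : Set.InjOn Prod.snd (S : Set (α × β))) {f : β → ℝ}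
    (hf : ∀ b, 0 ≤ f b) : ∑ x ∈ S, f x.2 ≤ ∑ b, f b := by
  classical
  rw [← sum_image hS]
  exact sum_le_univ_sum_of_nonneg hf

end Matching

namespace Matrix
variable {𝕜 : Type*} [RCLike 𝕜] {m n : Type*}

section PartialIsometry
variable [Fintype m] [Fintype n]

def IsPartialIsometry (A : Matrix m n 𝕜) : Prop := A * Aᴴ * A = A

lemma IsPartialIsometry.eq {A : Matrix m n 𝕜} (hA : A.IsPartialIsometry) : A * Aᴴ * A = A := hA

/-- For a partial isometry `A`, the matrix `A * Aᴴ` is a Hermitian idempotent, so its diagonal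
entry `x = ∑ i, ‖A p i‖ ^ 2` equals `∑ r, ‖(A * Aᴴ) p r‖ ^ 2 ≥ x ^ 2`. -/
lemma IsPartialIsometry.sum_norm_sq_row_le_one {A : Matrix m n 𝕜} (hA : A.IsPartialIsometry)
    (p : m) : ∑ i, ‖A p i‖ ^ 2 ≤ 1 := by
  have hQQ : A * Aᴴ * (A * Aᴴ) = A * Aᴴ := by rw [← Matrix.mul_assoc, hA.eq]
  have hdiag : (A * Aᴴ) p p = ((∑ i, ‖A p i‖ ^ 2 : ℝ) : 𝕜) := by
    simp [Matrix.mul_apply, RCLike.mul_conj]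
  have hsq : (A * Aᴴ) p p = ((∑ r, ‖(A * Aᴴ) p r‖ ^ 2 : ℝ) : 𝕜) := by
    conv_lhs => rw [← hQQ, Matrix.mul_apply]
    push_cast
    refine sum_congr rfl fun r _ => ?_
    rw [← (isHermitian_mul_conjTranspose_self A).apply p r, RCLike.star_def, RCLike.norm_conj,
      RCLike.conj_mul]
  set x := ∑ i, ‖A p i‖ ^ 2
  have hxx : x ^ 2 ≤ x := calc
    x ^ 2 = ‖(A * Aᴴ) p p‖ ^ 2 := by
      rw [hdiag, RCLike.norm_ofReal, abs_of_nonneg (by positivity)]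
    _ ≤ ∑ r, ‖(A * Aᴴ) p r‖ ^ 2 :=
      single_le_sum (f := fun r => ‖(A * Aᴴ) p r‖ ^ 2) (fun r _ => by positivity)
        (mem_univ p)
    _ = x := by exact_mod_cast hsq.symm.trans hdiag
  nlinarith [show 0 ≤ x by positivity]

lemma IsPartialIsometry.conjTranspose {A : Matrix m n 𝕜} (hA : A.IsPartialIsometry) :
    Aᴴ.IsPartialIsometry := by
  simpa [IsPartialIsometry, conjTranspose_mul, Matrix.mul_assoc] using
    congrArg Matrix.conjTranspose hA.eq

lemma IsPartialIsometry.sum_norm_sq_col_le_one {A : Matrix m n 𝕜} (hA : A.IsPartialIsometry)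
    (i : n) : ∑ p, ‖A p i‖ ^ 2 ≤ 1 := by
  simpa using hA.conjTranspose.sum_norm_sq_row_le_one i

lemma isPartialIsometry_of_mul_conjTranspose_eq_one [DecidableEq m] {A : Matrix m n 𝕜}
    (hA : A * Aᴴ = 1) : A.IsPartialIsometry := by
  rw [IsPartialIsometry, hA, Matrix.one_mul]

end PartialIsometry

lemma norm_mul_diagonal_mul_conjTranspose_apply_le {ι : Type*} [Fintype ι] [DecidableEq ι]
    (A : Matrix m ι 𝕜) (B : Matrix n ι 𝕜) {σ : ι → ℝ} (hσ : ∀ i, 0 ≤ σ i) (p : m) (q : n) :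
    ‖(A * diagonal (fun i => (σ i : 𝕜)) * Bᴴ) p q‖ ≤ ∑ i, σ i * (‖A p i‖ * ‖B q i‖) := by
  rw [Matrix.mul_apply]
  refine (norm_sum_le _ _).trans (sum_le_sum fun i _ => le_of_eq ?_)
  rw [mul_diagonal, conjTranspose_apply, norm_mul, norm_mul, norm_star, RCLike.norm_ofReal,
    abs_of_nonneg (hσ i)]
  ring

theorem exists_card_eq_sum_norm_mul_diagonal_mul_conjTranspose_le [Fintype m] [Fintype n]
    {ι : Type*} [Fintype ι] [DecidableEq ι] {A : Matrix m ι 𝕜} {B : Matrix n ι 𝕜}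
    (hA : A.IsPartialIsometry) (hB : B.IsPartialIsometry) {σ : ι → ℝ} (hσ : ∀ i, 0 ≤ σ i)
    {S : Finset (m × n)}
    (hfst : Set.InjOn Prod.fst (S : Set (m × n))) (hsnd : Set.InjOn Prod.snd (S : Set (m × n)))
    (hS : #S ≤ Fintype.card ι) :
    ∃ s : Finset ι, #s = #S ∧
      ∑ x ∈ S, ‖(A * diagonal (fun i => (σ i : 𝕜)) * Bᴴ) x.1 x.2‖ ≤ ∑ i ∈ s, σ i := by
  set c : ι → ℝ := fun i => ∑ x ∈ S, ‖A x.1 i‖ * ‖B x.2 i‖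
  have hc0 : ∀ i, 0 ≤ c i := fun i => sum_nonneg fun x _ => by positivity
  have hc1 : ∀ i, c i ≤ 1 := fun i =>
    sum_mul_le_one_of_sum_sq_le_one S
      ((sum_comp_fst_le hfst fun p => by positivity).trans (hA.sum_norm_sq_col_le_one i))
      ((sum_comp_snd_le hsnd fun q => by positivity).trans (hB.sum_norm_sq_col_le_one i))
  have hcS : ∑ i, c i ≤ #S := calc
    ∑ i, c i = ∑ x ∈ S, ∑ i, ‖A x.1 i‖ * ‖B x.2 i‖ := sum_comm
    _ ≤ ∑ x ∈ S, 1 := sum_le_sum fun x _ => sum_mul_le_one_of_sum_sq_le_one univ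
        (hA.sum_norm_sq_row_le_one x.1) (hB.sum_norm_sq_row_le_one x.2)
    _ = #S := by simp
  obtain ⟨s, hs, hle⟩ := exists_card_eq_sum_mul_le hσ hc0 hc1 hcS hS
  refine ⟨s, hs, ?_⟩
  calc ∑ x ∈ S, ‖(A * diagonal (fun i => (σ i : 𝕜)) * Bᴴ) x.1 x.2‖
      ≤ ∑ x ∈ S, ∑ i, σ i * (‖A x.1 i‖ * ‖B x.2 i‖) :=
        sum_le_sum fun x _ => norm_mul_diagonal_mul_conjTranspose_apply_le A B hσ x.1 x.2
    _ = ∑ i, σ i * c i := by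
        rw [sum_comm]
        simp only [c, mul_sum]
    _ ≤ ∑ i ∈ s, σ i := hle

section SingularValueDecomposition
variable [Fintype m] [Fintype n] [DecidableEq n] (P : Matrix m n 𝕜)

noncomputable def gramEigenvalues : n → ℝ :=
  (posSemidef_conjTranspose_mul_self P).1.eigenvalues

lemma gramEigenvalues_nonneg (i : n) : 0 ≤ gramEigenvalues P i :=
  (posSemidef_conjTranspose_mul_self P).eigenvalues_nonneg i

noncomputable def rightSingularVectors : Matrix n n 𝕜 :=
  (posSemidef_conjTranspose_mul_self P).1.eigenvectorUnitary

/-- `U = P W Σ⁺`: since `0⁻¹ = 0` in `ℝ`, the diagonal factor is the pseudo-inverse of `Σ`. -/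
noncomputable def leftSingularVectors : Matrix m n 𝕜 :=
  P * rightSingularVectors P * diagonal (fun i => (((√(gramEigenvalues P i))⁻¹ : ℝ) : 𝕜))

lemma rightSingularVectors_mul_conjTranspose :
    rightSingularVectors P * (rightSingularVectors P)ᴴ = 1 :=
  Unitary.coe_mul_star_self _

lemma gram_mul_rightSingularVectors :
    (P * rightSingularVectors P)ᴴ * (P * rightSingularVectors P) =
      diagonal (fun i => (gramEigenvalues P i : 𝕜)) := by
  have := (posSemidef_conjTranspose_mul_self P).1.conjStarAlgAut_star_eigenvectorUnitary
  rw [Unitary.conjStarAlgAut_star_apply] at this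
  rw [conjTranspose_mul, ← star_eq_conjTranspose (rightSingularVectors P)]
  simpa [gramEigenvalues, rightSingularVectors, Matrix.mul_assoc, Function.comp_def] using this

lemma mul_rightSingularVectors_apply_eq_zero {i : n} (hi : gramEigenvalues P i = 0) (p : m) :
    (P * rightSingularVectors P) p i = 0 := by
  have hcol : star (fun p => (P * rightSingularVectors P) p i) ⬝ᵥ
      (fun p => (P * rightSingularVectors P) p i) = 0 := by
    have := congrFun (congrFun (gram_mul_rightSingularVectors P) i) i
    rw [Matrix.mul_apply, diagonal_apply_eq, hi, RCLike.ofReal_zero] at this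
    simpa [dotProduct] using this
  exact congrFun (dotProduct_star_self_eq_zero.mp hcol) p

lemma leftSingularVectors_mul_diagonal_mul_conjTranspose :
    leftSingularVectors P * diagonal (fun i => ((√(gramEigenvalues P i) : ℝ) : 𝕜)) *
      (rightSingularVectors P)ᴴ = P := by
  have hcols : P * rightSingularVectors P *
      diagonal (fun i => (((√(gramEigenvalues P i))⁻¹ : ℝ) : 𝕜) *
        ((√(gramEigenvalues P i) : ℝ) : 𝕜)) =
        P * rightSingularVectors P := by
    ext p i
    rw [mul_diagonal]
    by_cases hi : gramEigenvalues P i = 0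
    · simp [hi, mul_rightSingularVectors_apply_eq_zero P hi]
    · have hσ : √(gramEigenvalues P i) ≠ 0 :=
        Real.sqrt_ne_zero'.2 ((gramEigenvalues_nonneg P i).lt_of_ne' hi)
      simp [hσ]
  rw [leftSingularVectors, Matrix.mul_assoc (P * _), diagonal_mul_diagonal]
  rw [hcols, Matrix.mul_assoc, rightSingularVectors_mul_conjTranspose, Matrix.mul_one]

lemma isPartialIsometry_rightSingularVectors : (rightSingularVectors P).IsPartialIsometry :=
  isPartialIsometry_of_mul_conjTranspose_eq_one (rightSingularVectors_mul_conjTranspose P)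

lemma isPartialIsometry_leftSingularVectors : (leftSingularVectors P).IsPartialIsometry := by
  have hev : ∀ x : ℝ, 0 ≤ x → (√x)⁻¹ * (√x)⁻¹ * x * (√x)⁻¹ = (√x)⁻¹ := by
    intro x hx
    rcases hx.eq_or_lt with rfl | hx
    · simp
    · have := Real.sqrt_pos.2 hx
      nth_rw 3 [← Real.mul_self_sqrt hx.le]
      field_simp
  set D : Matrix n n 𝕜 := diagonal (fun i => (((√(gramEigenvalues P i))⁻¹ : ℝ) : 𝕜))
    with hD
  have hDH : Dᴴ = D := by simp [hD]
  have hU : leftSingularVectors P = P * rightSingularVectors P * D := rfl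
  calc leftSingularVectors P * (leftSingularVectors P)ᴴ * leftSingularVectors P
      = P * rightSingularVectors P *
          (D * D * ((P * rightSingularVectors P)ᴴ * (P * rightSingularVectors P)) * D) := by
        rw [hU, conjTranspose_mul, hDH]
        simp only [Matrix.mul_assoc]
    _ = leftSingularVectors P := by
        rw [gram_mul_rightSingularVectors, hD, diagonal_mul_diagonal, diagonal_mul_diagonal,
          diagonal_mul_diagonal, hU]
        congr 2
        ext i
        exact_mod_cast hev _ (gramEigenvalues_nonneg P i)

end SingularValueDecomposition

end Matrix

section Diagonal
variable {m n : ℕ}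

lemma injOn_fst_setOf_sub_eq (j : ℤ) :
    Set.InjOn Prod.fst {pq : Fin m × Fin n | (pq.1 : ℤ) - pq.2 = j} := by
  rintro ⟨p, q⟩ h ⟨p', q'⟩ h' (rfl : p = p')
  simp only [Set.mem_ofPred_eq] at h h'
  simp only [Prod.mk.injEq, true_and]
  omega

lemma injOn_snd_setOf_sub_eq (j : ℤ) :
    Set.InjOn Prod.snd {pq : Fin m × Fin n | (pq.1 : ℤ) - pq.2 = j} := by
  rintro ⟨p, q⟩ h ⟨p', q'⟩ h' (rfl : q = q')
  simp only [Set.mem_ofPred_eq] at h h'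
  simp only [Prod.mk.injEq, and_true]
  omega

end Diagonal

lemma sum_singularValues_le_kyFan {m n : ℕ} (P : Matrix (Fin m) (Fin n) ℂ) (s : Finset (Fin n)) :
    ∑ i ∈ s, singularValues P i ≤ kyFan #s P := by
  refine le_csSup (Set.Finite.bddAbove ?_) ⟨s, rfl, rfl⟩
  refine (Set.finite_range fun s : Finset (Fin n) => ∑ i ∈ s, singularValues P i).subset ?_
  rintro x ⟨s, -, rfl⟩
  exact ⟨s, rfl⟩

/-- The sum of the absolute values of the matrix elements of `P` along any diagonal
(of shift `j`, having `k` terms) is at most the `k`th Ky-Fan norm of `P`. -/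
theorem diagonal_sum_le_kyFan {m n : ℕ} (P : Matrix (Fin m) (Fin n) ℂ) (j : ℤ) :
    (∑ pq ∈ Finset.univ.filter
        (fun pq : Fin m × Fin n => (pq.1 : ℤ) - (pq.2 : ℤ) = j),
        ‖P pq.1 pq.2‖) ≤
      kyFan ((Finset.univ.filter
        (fun pq : Fin m × Fin n => (pq.1 : ℤ) - (pq.2 : ℤ) = j)).card) P := by
  set S := univ.filter fun pq : Fin m × Fin n => (pq.1 : ℤ) - (pq.2 : ℤ) = j
  have hS : (S : Set (Fin m × Fin n)) ⊆ {pq | (pq.1 : ℤ) - pq.2 = j} := by simp [S]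
  have hsnd := (injOn_snd_setOf_sub_eq j).mono hS
  obtain ⟨s, hs, hle⟩ := exists_card_eq_sum_norm_mul_diagonal_mul_conjTranspose_le
    (isPartialIsometry_leftSingularVectors P) (isPartialIsometry_rightSingularVectors P)
    (fun i => Real.sqrt_nonneg _) ((injOn_fst_setOf_sub_eq j).mono hS) hsnd
    (by simpa using card_le_card_of_injOn Prod.snd (fun _ _ => mem_univ _) hsnd)
  rw [leftSingularVectors_mul_diagonal_mul_conjTranspose] at hle
  exact hle.trans (hs ▸ sum_singularValues_le_kyFan P s)
end

section
/- If a bipartite state ρ_{AB} on C^d ⊗ C^d with respect to L_{AB} = L_A ⊗ I + I ⊗ L_B has ρ_{AB}^{(k)} = 0 for all k with 1 ≤ k ≤ d−1, but ρ_{AB}^{(k)} ≠ 0 for some k ≥ d, then ρ_{AB} is not a product state ρ_A ⊗ ρ_B. -/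
/-!
If `ρ = ρA ⊗ ρB` is positive semidefinite, a nonzero entry `ρA x₁ y₁ * ρB x₂ y₂` forces the
diagonal entry at `(x₁, x₂)` to be nonzero, so `ρB x₂ x₂ ≠ 0` and the entry
`ρA x₁ y₁ * ρB x₂ x₂` is nonzero as well. If the first entry lies in a mode `k ≥ d`, the second
lies in the mode `x₁ - y₁ = k - (x₂ - y₂) ∈ [1, d - 1]`, which was assumed to vanish.
-/

open Matrix Kronecker ComplexOrder

namespace Matrix.PosSemidef

variable {𝕜 m n : Type*} [RCLike 𝕜]

/-- The `2 × 2` principal minor on `{i, j}` is `A i i * A j j - ‖A j i‖ ^ 2 ≥ 0`. -/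
theorem apply_eq_zero_of_diag_eq_zero {A : Matrix n n 𝕜} (hA : A.PosSemidef) {i : n}
    (hi : A i i = 0) (j : n) : A i j = 0 := by
  have hdet := (hA.submatrix ![i, j]).det_nonneg
  rw [det_fin_two] at hdet
  simp only [submatrix_apply, Matrix.cons_val_zero, Matrix.cons_val_one, hi, zero_mul,
    zero_sub] at hdet
  rw [← hA.1.apply i j, RCLike.star_def, RCLike.conj_mul, neg_nonneg, ← RCLike.ofReal_pow,
    RCLike.ofReal_nonpos, sq_nonpos_iff, norm_eq_zero] at hdet
  rw [← hA.1.apply i j, hdet, star_zero]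

theorem kronecker_apply_ne_zero_of_ne_zero {A : Matrix m m 𝕜} {B : Matrix n n 𝕜}
    (h : (A ⊗ₖ B).PosSemidef) {i₁ j₁ : m} {i₂ j₂ : n} (hne : A i₁ j₁ * B i₂ j₂ ≠ 0) :
    A i₁ j₁ * B i₂ i₂ ≠ 0 := by
  have hdiag : A i₁ i₁ * B i₂ i₂ ≠ 0 := fun h0 =>
    hne (h.apply_eq_zero_of_diag_eq_zero (i := (i₁, i₂)) h0 (j₁, j₂))
  exact mul_ne_zero (left_ne_zero_of_mul hne) (right_ne_zero_of_mul hdiag)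

end Matrix.PosSemidef

theorem gmode_eq_zero_iff {d : ℕ} {j : ℤ} {ρ : Matrix (Fin d × Fin d) (Fin d × Fin d) ℂ} :
    gmode d j ρ = 0 ↔
      ∀ x y : Fin d × Fin d, ((x.1 : ℤ) + x.2) - (y.1 + y.2) = j → ρ x y = 0 := by
  simp only [← Matrix.ext_iff, gmode, of_apply, Matrix.zero_apply, ite_eq_right_iff]

theorem not_product_of_mode_gap_general {d : ℕ}
    (ρ : Matrix (Fin d × Fin d) (Fin d × Fin d) ℂ)
    (hρ : ρ.PosSemidef)
    (hlow : ∀ k : ℤ, 1 ≤ k → k ≤ (d : ℤ) - 1 → gmode d k ρ = 0)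
    (hhigh : ∃ k : ℤ, (d : ℤ) ≤ k ∧ gmode d k ρ ≠ 0) :
    ¬∃ (ρA ρB : Matrix (Fin d) (Fin d) ℂ), ρ = ρA ⊗ₖ ρB := by
  rintro ⟨ρA, ρB, rfl⟩
  obtain ⟨k, hk, hne⟩ := hhigh
  obtain ⟨⟨x₁, x₂⟩, ⟨y₁, y₂⟩, hmode, hxy⟩ : ∃ x y : Fin d × Fin d,
      ((x.1 : ℤ) + x.2) - (y.1 + y.2) = k ∧ ρA x.1 y.1 * ρB x.2 y.2 ≠ 0 := by
    simpa [gmode_eq_zero_iff] using hne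
  dsimp only at hmode
  have hlocal := hρ.kronecker_apply_ne_zero_of_ne_zero hxy
  have := x₁.isLt
  have := x₂.isLt
  exact hlocal (gmode_eq_zero_iff.1 (hlow (x₁ - y₁) (by omega) (by omega)) (x₁, x₂) (y₁, x₂)
    (by simp))

/-- If a bipartite state has no modes `1 ≤ k ≤ d − 1` but some nonzero mode `k ≥ d`,
then it is not a product state; hence it carries correlations. -/
theorem not_product_of_mode_gap {d : ℕ}
    (ρ : Matrix (Fin d × Fin d) (Fin d × Fin d) ℂ)
    (hρ : ρ.PosSemidef) (htr : ρ.trace = 1)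
    (hlow : ∀ k : ℤ, 1 ≤ k → k ≤ (d : ℤ) - 1 → gmode d k ρ = 0)
    (hhigh : ∃ k : ℤ, (d : ℤ) ≤ k ∧ gmode d k ρ ≠ 0) :
    ¬∃ (ρA ρB : Matrix (Fin d) (Fin d) ℂ), ρ = ρA ⊗ₖ ρB :=
  not_product_of_mode_gap_general ρ hρ hlow hhigh
end
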